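/- arXiv:1711.05973 — 4 statements merged into one kernel-verified Lean document; each statement's English description precedes it below -/
import Mathlib

section
/- Let (Ω, Σ, μ) be a finite measure space, E a separable Banach space, m : Σ → E a μ-continuous vector measure, and ≿ a preference relation on Σ admitting a vector representation via m (i.e., m(A) = m(B) implies A ∼ B) and satisfying continuity: whenever A^k ≿ B for all k and m(A^k) → m(A) then A ≿ B, and whenever A ≿ B^k for all k and m(B^k) → m(B) then A ≿ B. Then there exists a continuous function φ : m(Σ) → ℝ with φ(0) = 0 such that for all A, B ∈ Σ: A ≿ B if and only if φ(m(A)) ≥ φ(m(B)). -/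
open MeasureTheory Filter

/-- The σ-algebra `Σ`, viewed as the type of measurable subsets of `Ω`. -/
abbrev MSet (Ω : Type*) [MeasurableSpace Ω] := {A : Set Ω // MeasurableSet A}

/-!
The relation induced on `m(Σ)` is a total preorder with closed contour sets (closedness is
sequential, which suffices in the second countable space `E`), so φ comes from Debreu's theorem:
such a preorder on a second countable space has a continuous utility. Subtracting `φ 0` normalises.

A continuous utility is a weighted sum `∑ 2⁻ⁱ Gᵢ` of countably many continuous monotone
`Gᵢ : α → [0, 1]` such that every strict pair `x < y` is separated by some `Gᵢ`. If `[x, y]`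
contains a jump `p ⋖ q`, then `Ici q = Ioi p` is clopen and its indicator separates; up to
equivalence there are only countably many jump tops, at most one per basic open set. Otherwise
`[x, y]` has no jumps, so it contains `c < d` from a countable dense set with `[c, d]` jump-free,
and an Urysohn-type function built on a dyadic chain of points from `c` to `d` separates.
-/

open Set Topology

section TotalPreorder

variable {α : Type*} [Preorder α] [Std.Total (fun a b : α => a ≤ b)]

theorem lt_of_not_ge_of_total {a b : α} (h : ¬b ≤ a) : a < b :=
  lt_of_le_not_ge ((total_of (· ≤ ·) a b).resolve_right h) h

theorem compl_Iic_of_total (a : α) : (Iic a)ᶜ = Ioi a :=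
  ext fun _ => ⟨lt_of_not_ge_of_total, fun h => h.not_ge⟩

theorem compl_Ici_of_total (a : α) : (Ici a)ᶜ = Iio a :=
  ext fun _ => ⟨lt_of_not_ge_of_total, fun h => h.not_ge⟩

theorem CovBy.Ici_eq_Ioi_of_total {p q : α} (h : p ⋖ q) : Ici q = Ioi p :=
  Subset.antisymm (fun _ hx => h.lt.trans_le hx)
    fun _ hx => not_not.mp fun hqx => h.2 hx (lt_of_not_ge_of_total hqx)

variable [TopologicalSpace α]

theorem isOpen_Ioi_of_total [ClosedIicTopology α] (c : α) : IsOpen (Ioi c) :=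
  compl_Iic_of_total c ▸ isClosed_Iic.isOpen_compl

theorem isOpen_Iio_of_total [ClosedIciTopology α] (c : α) : IsOpen (Iio c) :=
  compl_Ici_of_total c ▸ isClosed_Ici.isOpen_compl

theorem isOpen_Ioo_of_total [ClosedIciTopology α] [ClosedIicTopology α] (a b : α) :
    IsOpen (Ioo a b) :=
  Ioi_inter_Iio (a := a) (b := b) ▸ (isOpen_Ioi_of_total a).inter (isOpen_Iio_of_total b)

theorem CovBy.isClopen_Ici_of_total [ClosedIciTopology α] [ClosedIicTopology α] {p q : α}
    (h : p ⋖ q) : IsClopen (Ici q) :=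
  ⟨isClosed_Ici, h.Ici_eq_Ioi_of_total ▸ isOpen_Ioi_of_total p⟩

end TotalPreorder

theorem monotone_indicator_Ici_one {α : Type*} [Preorder α] (q : α) :
    Monotone ((Ici q).indicator (1 : α → ℝ)) := fun x y hxy => by
  by_cases hx : q ≤ x
  · simp [hx, hx.trans hxy]
  · simp only [indicator, mem_Ici, hx, if_false]
    split_ifs <;> norm_num

theorem exists_dyadic_btwn {s t : ℝ} (hs : 0 ≤ s) (hst : s < t) (ht : t ≤ 1) :
    ∃ n k : ℕ, k ≤ 2 ^ n ∧ s < k / 2 ^ n ∧ k / 2 ^ n < t := by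
  obtain ⟨n, hn⟩ := exists_pow_lt_of_lt_one (sub_pos.2 hst) (by norm_num : (1 / 2 : ℝ) < 1)
  have h2n : (0 : ℝ) < 2 ^ n := by positivity
  have hlo : s < (⌊s * 2 ^ n⌋₊ + 1 : ℕ) / 2 ^ n := by
    rw [lt_div_iff₀ h2n]
    exact_mod_cast Nat.lt_floor_add_one _
  have hhi : ((⌊s * 2 ^ n⌋₊ + 1 : ℕ) : ℝ) / 2 ^ n < t := by
    rw [div_pow, one_pow, div_lt_iff₀ h2n] at hn
    rw [div_lt_iff₀ h2n]
    push_cast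
    linarith [Nat.floor_le (mul_nonneg hs h2n.le)]
  exact ⟨n, _, by exact_mod_cast ((div_lt_one h2n).1 (hhi.trans_le ht)).le, hlo, hhi⟩

namespace Debreu

variable {α : Type*} [Preorder α]

open Classical in
noncomputable def someBetween (p q : α) : α :=
  if h : (Ioo p q).Nonempty then h.some else q

theorem someBetween_mem_Ioo {p q : α} (h : (Ioo p q).Nonempty) : someBetween p q ∈ Ioo p q := by
  rw [someBetween, dif_pos h]
  exact h.some_mem

/-- `dyadicChain a b n k` is the point placed at `k / 2 ^ n`: level `n + 1` keeps the points of
level `n` at the even positions and puts a point strictly between two neighbours at the odd ones. -/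
noncomputable def dyadicChain (a b : α) : ℕ → ℕ → α
  | 0, k => if k = 0 then a else b
  | n + 1, k =>
    if k % 2 = 0 then dyadicChain a b n (k / 2)
    else someBetween (dyadicChain a b n (k / 2)) (dyadicChain a b n (k / 2 + 1))

variable {a b x : α}

@[simp]
theorem dyadicChain_zero_right : ∀ n, dyadicChain a b n 0 = a
  | 0 => rfl
  | n + 1 => by simp [dyadicChain, dyadicChain_zero_right n]

theorem dyadicChain_two_mul (n k : ℕ) :
    dyadicChain a b (n + 1) (2 * k) = dyadicChain a b n k := by
  simp [dyadicChain]

theorem dyadicChain_two_mul_add_one (n k : ℕ) :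
    dyadicChain a b (n + 1) (2 * k + 1) =
      someBetween (dyadicChain a b n k) (dyadicChain a b n (k + 1)) := by
  simp [dyadicChain, Nat.add_mod, Nat.add_div]

theorem dyadicChain_mul_two_pow (n m k : ℕ) :
    dyadicChain a b (n + m) (k * 2 ^ m) = dyadicChain a b n k := by
  induction m with
  | zero => simp
  | succ m ih => rw [← add_assoc, pow_succ, ← mul_assoc, mul_comm _ 2, dyadicChain_two_mul, ih]

theorem dyadicChain_two_pow (n : ℕ) : dyadicChain a b n (2 ^ n) = b := by
  simpa [dyadicChain] using dyadicChain_mul_two_pow (a := a) (b := b) 0 n 1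

def NoJumpBetween (a b : α) : Prop := ∀ p q, a ≤ p → q ≤ b → ¬p ⋖ q

theorem dyadicChain_lt_succ (hab : a < b) (hd : NoJumpBetween a b) :
    ∀ n, ∀ k < 2 ^ n, dyadicChain a b n k < dyadicChain a b n (k + 1)
  | 0, k, hk => by
    obtain rfl : k = 0 := by omega
    simpa [dyadicChain] using hab
  | n + 1, k, hk => by
    have hmono : StrictMonoOn (dyadicChain a b n) (Iic (2 ^ n)) :=
      strictMonoOn_Iic_of_lt_succ fun j hj => dyadicChain_lt_succ hab hd n j hj
    have hmem : ∀ j ≤ 2 ^ n, dyadicChain a b n j ∈ Icc a b := fun j hj =>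
      ⟨by simpa using hmono.monotoneOn (Nat.zero_le _) hj (Nat.zero_le j),
        by simpa [dyadicChain_two_pow] using hmono.monotoneOn hj (mem_Iic.2 le_rfl) hj⟩
    have hbetween : ∀ j < 2 ^ n, someBetween (dyadicChain a b n j) (dyadicChain a b n (j + 1)) ∈
        Ioo (dyadicChain a b n j) (dyadicChain a b n (j + 1)) := fun j hj =>
      someBetween_mem_Ioo <| (not_covBy_iff_nonempty_Ioo (dyadicChain_lt_succ hab hd n j hj)).1 <|
        hd _ _ (hmem j hj.le).1 (hmem (j + 1) hj).2
    rw [pow_succ] at hk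
    obtain ⟨j, rfl | rfl⟩ := Nat.even_or_odd' k
    · rw [dyadicChain_two_mul, dyadicChain_two_mul_add_one]
      exact (hbetween j (by omega)).1
    · rw [dyadicChain_two_mul_add_one, show 2 * j + 1 + 1 = 2 * (j + 1) by ring,
        dyadicChain_two_mul]
      exact (hbetween j (by omega)).2

theorem strictMonoOn_dyadicChain (hab : a < b) (hd : NoJumpBetween a b) (n : ℕ) :
    StrictMonoOn (dyadicChain a b n) (Iic (2 ^ n)) :=
  strictMonoOn_Iic_of_lt_succ fun j hj => dyadicChain_lt_succ hab hd n j hj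

theorem dyadicChain_lt_dyadicChain (hab : a < b) (hd : NoJumpBetween a b) {n k m l : ℕ}
    (hl : l ≤ 2 ^ m) (h : (k : ℝ) / 2 ^ n < l / 2 ^ m) :
    dyadicChain a b n k < dyadicChain a b m l := by
  rw [div_lt_div_iff₀ (by positivity) (by positivity)] at h
  have hkl : k * 2 ^ m < l * 2 ^ n := by exact_mod_cast h
  have hl' : l * 2 ^ n ≤ 2 ^ (n + m) := by
    rw [pow_add, mul_comm (2 ^ n)]
    exact Nat.mul_le_mul_right _ hl
  rw [← dyadicChain_mul_two_pow n m k, ← dyadicChain_mul_two_pow m n l, add_comm m n]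
  exact strictMonoOn_dyadicChain hab hd (n + m) (hkl.le.trans hl') hl' hkl

noncomputable def dyadicUtility (a b x : α) : ℝ :=
  sSup (insert 0 {r | ∃ n k : ℕ, k ≤ 2 ^ n ∧ dyadicChain a b n k ≤ x ∧ r = k / 2 ^ n})

theorem dyadicUtility_le {s : ℝ} (hs : 0 ≤ s)
    (h : ∀ n k : ℕ, k ≤ 2 ^ n → dyadicChain a b n k ≤ x → (k : ℝ) / 2 ^ n ≤ s) :
    dyadicUtility a b x ≤ s :=
  csSup_le (insert_nonempty _ _) <| by
    rintro r (rfl | ⟨n, k, hk, hx, rfl⟩)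
    exacts [hs, h n k hk hx]

theorem bddAbove_dyadicUtility_set :
    BddAbove (insert 0
      {r : ℝ | ∃ n k : ℕ, k ≤ 2 ^ n ∧ dyadicChain a b n k ≤ x ∧ r = k / 2 ^ n}) :=
  ⟨1, by
    rintro _ (rfl | ⟨n, k, hk, -, rfl⟩)
    exacts [zero_le_one, div_le_one_of_le₀ (by exact_mod_cast hk) (by positivity)]⟩

theorem dyadicUtility_le_one (a b x : α) : dyadicUtility a b x ≤ 1 :=
  dyadicUtility_le zero_le_one fun _ _ hk _ =>
    div_le_one_of_le₀ (by exact_mod_cast hk) (by positivity)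

theorem dyadicUtility_nonneg (a b x : α) : 0 ≤ dyadicUtility a b x :=
  le_csSup bddAbove_dyadicUtility_set (mem_insert _ _)

theorem le_dyadicUtility {n k : ℕ} (hk : k ≤ 2 ^ n) (hx : dyadicChain a b n k ≤ x) :
    (k : ℝ) / 2 ^ n ≤ dyadicUtility a b x :=
  le_csSup bddAbove_dyadicUtility_set (mem_insert_of_mem _ ⟨n, k, hk, hx, rfl⟩)

theorem exists_lt_of_lt_dyadicUtility {s : ℝ} (hs : 0 ≤ s) (h : s < dyadicUtility a b x) :
    ∃ n k : ℕ, k ≤ 2 ^ n ∧ dyadicChain a b n k ≤ x ∧ s < k / 2 ^ n := by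
  obtain ⟨r, hr, hsr⟩ := exists_lt_of_lt_csSup (insert_nonempty _ _) h
  rcases hr with rfl | ⟨n, k, hk, hx, rfl⟩
  · exact absurd hs hsr.not_ge
  · exact ⟨n, k, hk, hx, hsr⟩

theorem monotone_dyadicUtility (a b : α) : Monotone (dyadicUtility a b) := fun _ _ hxy =>
  dyadicUtility_le (dyadicUtility_nonneg _ _ _) fun _ _ hk hx => le_dyadicUtility hk (hx.trans hxy)

theorem dyadicUtility_eq_zero (hab : a < b) (hd : NoJumpBetween a b) (hx : x ≤ a) :
    dyadicUtility a b x = 0 := by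
  refine le_antisymm (dyadicUtility_le le_rfl fun n k hk hkx => ?_) (dyadicUtility_nonneg a b x)
  obtain rfl | hk0 := Nat.eq_zero_or_pos k
  · simp
  · have := strictMonoOn_dyadicChain hab hd n (Nat.zero_le _) hk hk0
    exact absurd (hkx.trans hx) (by simpa using this.not_ge)

theorem dyadicUtility_eq_one (hx : b ≤ x) : dyadicUtility a b x = 1 :=
  le_antisymm (dyadicUtility_le_one a b x) <| by
    simpa using le_dyadicUtility (a := a) (n := 0) (k := 1) le_rfl (by simpa [dyadicChain] using hx)

section Topology

variable [TopologicalSpace α] [Std.Total (fun a b : α => a ≤ b)]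

theorem lowerSemicontinuous_dyadicUtility [ClosedIicTopology α] (hab : a < b)
    (hd : NoJumpBetween a b) : LowerSemicontinuous (dyadicUtility a b) := by
  intro x s hs
  rcases lt_or_ge s 0 with hs0 | hs0
  · exact Filter.Eventually.of_forall fun x' => hs0.trans_le (dyadicUtility_nonneg a b x')
  obtain ⟨n, k, hk, hkx, hsk⟩ := exists_lt_of_lt_dyadicUtility hs0 hs
  obtain ⟨m, l, hl, hsl, hlk⟩ :=
    exists_dyadic_btwn hs0 hsk (div_le_one_of_le₀ (by exact_mod_cast hk) (by positivity))
  have hlt : dyadicChain a b m l < dyadicChain a b n k := dyadicChain_lt_dyadicChain hab hd hk hlk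
  filter_upwards [(isOpen_Ioi_of_total _).mem_nhds (hlt.trans_le hkx)] with x' hx'
  exact hsl.trans_le (le_dyadicUtility hl hx'.le)

theorem upperSemicontinuous_dyadicUtility [ClosedIciTopology α] (hab : a < b)
    (hd : NoJumpBetween a b) : UpperSemicontinuous (dyadicUtility a b) := by
  intro x s hs
  rcases lt_or_ge 1 s with hs1 | hs1
  · exact Filter.Eventually.of_forall fun x' => (dyadicUtility_le_one a b x').trans_lt hs1
  obtain ⟨n, k, hk, hxk, hks⟩ := exists_dyadic_btwn (dyadicUtility_nonneg a b x) hs hs1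
  have hx : x < dyadicChain a b n k :=
    lt_of_not_ge_of_total fun h => (le_dyadicUtility hk h).not_gt hxk
  filter_upwards [(isOpen_Iio_of_total _).mem_nhds hx] with x' hx'
  refine lt_of_le_of_lt (dyadicUtility_le (by positivity) fun m l hl hlx' => ?_) hks
  by_contra! hkl
  exact lt_asymm hx' ((dyadicChain_lt_dyadicChain hab hd hl hkl).trans_le hlx')

theorem continuous_dyadicUtility [ClosedIciTopology α] [ClosedIicTopology α] (hab : a < b)
    (hd : NoJumpBetween a b) : Continuous (dyadicUtility a b) :=
  continuous_iff_lower_upperSemicontinuous.2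
    ⟨lowerSemicontinuous_dyadicUtility hab hd, upperSemicontinuous_dyadicUtility hab hd⟩

theorem exists_continuous_utility_of_separating {ι : Type*} [Countable ι] (G : ι → α → ℝ)
    (hcont : ∀ i, Continuous (G i)) (hmono : ∀ i, Monotone (G i))
    (hbdd : ∀ i x, |G i x| ≤ 1)
    (hsep : ∀ x y : α, x < y → ∃ i, G i x < G i y) :
    ∃ u : α → ℝ, Continuous u ∧ ∀ x y, x ≤ y ↔ u x ≤ u y := by
  have := Encodable.ofCountable ι
  set w : ι → ℝ := fun i => (1 / 2) ^ Encodable.encode i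
  have hw : Summable w := summable_geometric_two_encode
  have hwpos : ∀ i, 0 < w i := fun i => by positivity
  have hterm : ∀ i x, ‖w i * G i x‖ ≤ w i := fun i x => by
    rw [norm_mul, Real.norm_of_nonneg (hwpos i).le]
    exact mul_le_of_le_one_right (hwpos i).le (hbdd i x)
  have hsum : ∀ x, Summable fun i => w i * G i x := fun x => hw.of_norm_bounded (hterm · x)
  have hle : ∀ {x y}, x ≤ y → ∀ i, w i * G i x ≤ w i * G i y := fun hxy i =>
    mul_le_mul_of_nonneg_left (hmono i hxy) (hwpos i).le
  refine ⟨fun x => ∑' i, w i * G i x,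
    continuous_tsum (fun i => continuous_const.mul (hcont i)) hw hterm,
    fun x y => ⟨fun hxy => (hsum x).tsum_le_tsum (hle hxy) (hsum y), fun h => ?_⟩⟩
  by_contra hxy
  have hyx := lt_of_not_ge_of_total hxy
  obtain ⟨i, hi⟩ := hsep y x hyx
  exact h.not_gt <|
    (hsum y).tsum_lt_tsum (hle hyx.le) (mul_lt_mul_of_pos_left hi (hwpos i)) (hsum x)

variable [ClosedIciTopology α] [ClosedIicTopology α]

theorem exists_countable_covBy_tops [SecondCountableTopology α] :
    ∃ Q : Set α, Q.Countable ∧ (∀ q ∈ Q, IsClopen (Ici q)) ∧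
      ∀ p q, p ⋖ q → ∃ q' ∈ Q, Ici q' = Ici q := by
  obtain ⟨B, hBc, -, hB⟩ := TopologicalSpace.exists_countable_basis α
  let W : Set α → Set α := fun U => {q | (∃ p, p ⋖ q) ∧ q ∈ U ∧ U ⊆ Ici q}
  refine ⟨⋃ U ∈ B, range fun h : (W U).Nonempty => h.some,
    hBc.biUnion fun U _ => countable_range _, ?_, fun p q hpq => ?_⟩
  · simp only [mem_iUnion, mem_range]
    rintro _ ⟨U, -, h, rfl⟩
    obtain ⟨p, hp⟩ := h.some_mem.1
    exact hp.isClopen_Ici_of_total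
  · obtain ⟨U, hUB, hqU, hU⟩ :=
      hB.exists_subset_of_mem_open (mem_Ici.2 le_rfl) hpq.isClopen_Ici_of_total.isOpen
    have hW : (W U).Nonempty := ⟨q, ⟨p, hpq⟩, hqU, hU⟩
    obtain ⟨-, hq'U, hU'⟩ := hW.some_mem
    exact ⟨hW.some, mem_biUnion hUB ⟨hW, rfl⟩,
      Subset.antisymm (Ici_subset_Ici.2 (hU hq'U)) (Ici_subset_Ici.2 (hU' hqU))⟩

theorem exists_mem_dense_noJumpBetween {D : Set α} (hD : Dense D) {x y : α} (hxy : x < y)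
    (hjump : NoJumpBetween x y) :
    ∃ c ∈ D, ∃ d ∈ D, x < c ∧ c < d ∧ d < y ∧ NoJumpBetween c d := by
  have hIoo : ∀ {a b : α}, x ≤ a → b ≤ y → a < b → ∃ e ∈ D, e ∈ Ioo a b :=
    fun hxa hby hab => hD.exists_mem_open (isOpen_Ioo_of_total _ _)
      ((not_covBy_iff_nonempty_Ioo hab).1 (hjump _ _ hxa hby))
  obtain ⟨d, hdD, hxd, hdy⟩ := hIoo le_rfl le_rfl hxy
  obtain ⟨c, hcD, hxc, hcd⟩ := hIoo le_rfl hdy.le hxd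
  exact ⟨c, hcD, d, hdD, hxc, hcd, hdy, fun p q hcp hqd =>
    hjump p q (hxc.le.trans hcp) (hqd.trans hdy.le)⟩

theorem exists_continuous_utility [SecondCountableTopology α] :
    ∃ u : α → ℝ, Continuous u ∧ ∀ x y, x ≤ y ↔ u x ≤ u y := by
  obtain ⟨Q, hQc, hQ, hcov⟩ := exists_countable_covBy_tops (α := α)
  obtain ⟨D, hDc, hD⟩ := TopologicalSpace.exists_countable_dense α
  let P : Set (α × α) := {cd ∈ D ×ˢ D | cd.1 < cd.2 ∧ NoJumpBetween cd.1 cd.2}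
  have : Countable Q := hQc.to_subtype
  have : Countable P := ((hDc.prod hDc).mono (sep_subset _ _)).to_subtype
  refine exists_continuous_utility_of_separating
    (Sum.elim (fun q : Q => (Ici (q : α)).indicator 1) fun cd : P => dyadicUtility cd.1.1 cd.1.2)
    ?_ ?_ ?_ fun x y hxy => ?_
  · rintro (q | cd)
    exacts [(hQ q q.2).continuous_indicator continuous_const,
      continuous_dyadicUtility cd.2.2.1 cd.2.2.2]
  · rintro (q | cd)
    exacts [monotone_indicator_Ici_one _, monotone_dyadicUtility _ _]
  · rintro (q | cd) x
    · by_cases hx : (q : α) ≤ x <;> simp [hx]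
    · exact abs_le.2 ⟨(neg_nonpos.2 zero_le_one).trans (dyadicUtility_nonneg _ _ _),
        dyadicUtility_le_one _ _ _⟩
  by_cases hjump : NoJumpBetween x y
  · obtain ⟨c, hc, d, hd, hxc, hcd, hdy, hcd'⟩ := exists_mem_dense_noJumpBetween hD hxy hjump
    refine ⟨.inr ⟨(c, d), ⟨hc, hd⟩, hcd, hcd'⟩, ?_⟩
    simp only [Sum.elim_inr]
    rw [dyadicUtility_eq_zero hcd hcd' hxc.le, dyadicUtility_eq_one hdy.le]
    exact zero_lt_one
  · simp only [NoJumpBetween, not_forall, not_not] at hjump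
    obtain ⟨p, q, hxp, hqy, hpq⟩ := hjump
    obtain ⟨q', hq'Q, hq'⟩ := hcov p q hpq
    refine ⟨.inl ⟨q', hq'Q⟩, ?_⟩
    have hx : x ∉ Ici q := fun hqx => hpq.lt.not_ge (hqx.trans hxp)
    simp only [Sum.elim_inl, hq', indicator_of_notMem hx, indicator_of_mem (mem_Ici.2 hqy)]
    exact zero_lt_one

end Topology

end Debreu

theorem exists_continuousOn_utility_on_range {α β : Type*} [TopologicalSpace β]
    [SecondCountableTopology β] (f : α → β) (r : α → α → Prop)
    (htotal : ∀ a b, r a b ∨ r b a) (htrans : ∀ a b c, r a b → r b c → r a c)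
    (hcong : ∀ a b, f a = f b → r a b)
    (hup : ∀ a b (as : ℕ → α), (∀ k, r (as k) b) →
      Tendsto (fun k => f (as k)) atTop (𝓝 (f a)) → r a b)
    (hdown : ∀ a b (bs : ℕ → α), (∀ k, r a (bs k)) →
      Tendsto (fun k => f (bs k)) atTop (𝓝 (f b)) → r a b) :
    ∃ φ : β → ℝ, ContinuousOn φ (range f) ∧
      ∀ a b, r a b ↔ φ (f b) ≤ φ (f a) := by
  set σ := rangeSplitting f
  have hfσ : ∀ x, f (σ x) = x := apply_rangeSplitting f
  have hσ : ∀ {x : range f} {a}, f a = x → r (σ x) a ∧ r a (σ x) := fun h =>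
    ⟨hcong _ _ ((hfσ _).trans h.symm), hcong _ _ (h.trans (hfσ _).symm)⟩
  -- `x ≤ y` when a preimage of `y` is preferred; by `hcong` any preimage would do
  let _ : Preorder (range f) :=
    { le := fun x y => r (σ y) (σ x)
      le_refl := fun x => (htotal _ _).elim id id
      le_trans := fun _ _ _ hxy hyz => htrans _ _ _ hyz hxy }
  have : Std.Total (fun x y : range f => x ≤ y) := ⟨fun x y => htotal _ _⟩
  have hlim : ∀ {xs : ℕ → range f} {x}, Tendsto xs atTop (𝓝 x) →
      Tendsto (fun k => f (σ (xs k))) atTop (𝓝 (f (σ x))) := fun h => by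
    simp only [hfσ]
    exact (continuous_subtype_val.tendsto _).comp h
  have : ClosedIciTopology (range f) := ⟨fun x => IsSeqClosed.isClosed fun xs y hxs hlim' =>
    hup _ _ _ hxs (hlim hlim')⟩
  have : ClosedIicTopology (range f) := ⟨fun x => IsSeqClosed.isClosed fun xs y hxs hlim' =>
    hdown _ _ _ hxs (hlim hlim')⟩
  obtain ⟨u, hu, hurep⟩ := Debreu.exists_continuous_utility (α := range f)
  have hext : ∀ x : range f, Function.extend Subtype.val u 0 x = u x :=
    Subtype.val_injective.extend_apply u 0
  refine ⟨Function.extend Subtype.val u 0, ?_, fun a b => ?_⟩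
  · rw [continuousOn_iff_continuous_domRestrict]
    convert hu using 1
    exact funext hext
  · have ha := hσ (x := ⟨f a, mem_range_self a⟩) rfl
    have hb := hσ (x := ⟨f b, mem_range_self b⟩) rfl
    rw [hext ⟨f a, mem_range_self a⟩, hext ⟨f b, mem_range_self b⟩, ← hurep]
    exact ⟨fun h => htrans _ _ _ (htrans _ _ _ ha.1 h) hb.2,
      fun h => htrans _ _ _ (htrans _ _ _ ha.2 h) hb.1⟩

theorem stmt6_general {Ω : Type*} [MeasurableSpace Ω]
    {E : Type*} [NormedAddCommGroup E]
    [TopologicalSpace.SeparableSpace E]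
    (m : VectorMeasure Ω E)
    -- `≿` is a preference relation on `Σ`: complete and transitive
    (pref : MSet Ω → MSet Ω → Prop)
    (hcomplete : ∀ A B, pref A B ∨ pref B A)
    (htrans : ∀ A B C, pref A B → pref B C → pref A C)
    -- vector representation: `m(A) = m(B)` implies `A ∼ B`
    (hcong : ∀ A B, m A.1 = m B.1 → pref A B ∧ pref B A)
    -- continuity
    (hcont₁ : ∀ (A B : MSet Ω) (Ak : ℕ → MSet Ω), (∀ k, pref (Ak k) B) →
      Tendsto (fun k => m (Ak k).1) atTop (nhds (m A.1)) → pref A B)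
    (hcont₂ : ∀ (A B : MSet Ω) (Bk : ℕ → MSet Ω), (∀ k, pref A (Bk k)) →
      Tendsto (fun k => m (Bk k).1) atTop (nhds (m B.1)) → pref A B) :
    ∃ φ : E → ℝ, ContinuousOn φ {x | ∃ A : MSet Ω, x = m A.1} ∧ φ 0 = 0 ∧
      ∀ A B : MSet Ω, (pref A B ↔ φ (m B.1) ≤ φ (m A.1)) := by
  obtain ⟨φ, hφ, hrep⟩ := exists_continuousOn_utility_on_range (fun A : MSet Ω => m A.1)
    pref hcomplete htrans (fun A B h => (hcong A B h).1) hcont₁ hcont₂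
  have hrange : {x | ∃ A : MSet Ω, x = m A.1} = range fun A : MSet Ω => m A.1 :=
    ext fun _ => exists_congr fun _ => eq_comm
  refine ⟨fun x => φ x - φ 0, hrange ▸ hφ.sub continuousOn_const, sub_self _,
    fun A B => ?_⟩
  rw [hrep, sub_le_sub_iff_right]

theorem stmt6 {Ω : Type*} [MeasurableSpace Ω] (μ : Measure Ω) [IsFiniteMeasure μ]
    {E : Type*} [NormedAddCommGroup E] [NormedSpace ℝ E]
    [TopologicalSpace.SeparableSpace E]
    (m : VectorMeasure Ω E)
    (habs : ∀ N : Set Ω, μ N = 0 → ∀ A : Set Ω, MeasurableSet A → m (A ∩ N) = 0)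
    -- `≿` is a preference relation on `Σ`: complete and transitive
    (pref : MSet Ω → MSet Ω → Prop)
    (hcomplete : ∀ A B, pref A B ∨ pref B A)
    (htrans : ∀ A B C, pref A B → pref B C → pref A C)
    -- vector representation: `m(A) = m(B)` implies `A ∼ B`
    (hcong : ∀ A B, m A.1 = m B.1 → pref A B ∧ pref B A)
    -- continuity
    (hcont₁ : ∀ (A B : MSet Ω) (Ak : ℕ → MSet Ω), (∀ k, pref (Ak k) B) →
      Tendsto (fun k => m (Ak k).1) atTop (nhds (m A.1)) → pref A B)
    (hcont₂ : ∀ (A B : MSet Ω) (Bk : ℕ → MSet Ω), (∀ k, pref A (Bk k)) →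
      Tendsto (fun k => m (Bk k).1) atTop (nhds (m B.1)) → pref A B) :
    ∃ φ : E → ℝ, ContinuousOn φ {x | ∃ A : MSet Ω, x = m A.1} ∧ φ 0 = 0 ∧
      ∀ A B : MSet Ω, (pref A B ↔ φ (m B.1) ≤ φ (m A.1)) :=
  stmt6_general m pref hcomplete htrans hcong hcont₁ hcont₂
end

section
/- Let (Ω, Σ, μ) be a finite measure space, E a Banach space, and m : Σ → E a μ-continuous vector measure whose range m(Σ) is not convex. Then there exist a continuous function φ : m(S) → ℝ with φ(0) = 0 and an element f ∈ S = {g ∈ L^∞ : 0 ≤ g ≤ 1} of the form f = tχ_C + (1−t)χ_D with t ∈ (0,1) and C, D ∈ Σ, such that φ attains its maximum over m(S) at the unique point x̂ = ∫ f dm, and there is no A ∈ Σ with φ(m(A)) = φ(x̂). In particular, for the preference relation on S defined by g ≿° h ⟺ φ(∫ g dm) ≥ φ(∫ h dm), there is no A ∈ Σ with f ∼° χ_A. -/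
open MeasureTheory

/-- The set `S = {f ∈ L^∞ : 0 ≤ f ≤ 1 a.e.}`. -/
def Sset {Ω : Type*} [MeasurableSpace Ω] (μ : Measure Ω) : Set (Lp ℝ ⊤ μ) :=
  {f | ∀ᵐ x ∂μ, 0 ≤ f x ∧ f x ≤ 1}

theorem stmt9 {Ω : Type*} [MeasurableSpace Ω] (μ : Measure Ω) [IsFiniteMeasure μ]
    {E : Type*} [NormedAddCommGroup E] [NormedSpace ℝ E]
    (m : VectorMeasure Ω E)
    (habs : ∀ N : Set Ω, μ N = 0 → ∀ A : Set Ω, MeasurableSet A → m (A ∩ N) = 0)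
    -- `T` is the integration operator `f ↦ ∫ f dm`
    (T : Lp ℝ ⊤ μ →ₗ[ℝ] E)
    (hT : ∀ (A : Set Ω) (hA : MeasurableSet A),
      T (indicatorConstLp ⊤ hA (measure_ne_top μ A) (1 : ℝ)) = m A)
    -- the range `m(Σ)` is not convex
    (hnc : ¬ Convex ℝ {x | ∃ A : MSet Ω, x = m A.1}) :
    ∃ (φ : E → ℝ) (t : ℝ) (C D : MSet Ω),
      t ∈ Set.Ioo (0 : ℝ) 1 ∧
      ContinuousOn φ (T '' Sset μ) ∧ φ 0 = 0 ∧
      (t • indicatorConstLp ⊤ C.2 (measure_ne_top μ C.1) (1 : ℝ) +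
        (1 - t) • indicatorConstLp ⊤ D.2 (measure_ne_top μ D.1) (1 : ℝ)) ∈ Sset μ ∧
      -- `φ` attains its maximum over `m(S) = T''S` at the unique point `xh = ∫ f dm`
      (∀ z ∈ T '' Sset μ,
        φ z ≤ φ (T (t • indicatorConstLp ⊤ C.2 (measure_ne_top μ C.1) (1 : ℝ) +
          (1 - t) • indicatorConstLp ⊤ D.2 (measure_ne_top μ D.1) (1 : ℝ)))) ∧
      (∀ z ∈ T '' Sset μ,
        φ z = φ (T (t • indicatorConstLp ⊤ C.2 (measure_ne_top μ C.1) (1 : ℝ) +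
          (1 - t) • indicatorConstLp ⊤ D.2 (measure_ne_top μ D.1) (1 : ℝ))) →
        z = T (t • indicatorConstLp ⊤ C.2 (measure_ne_top μ C.1) (1 : ℝ) +
          (1 - t) • indicatorConstLp ⊤ D.2 (measure_ne_top μ D.1) (1 : ℝ))) ∧
      -- there is no `A ∈ Σ` with `φ(m(A)) = φ(xh)`; in particular `f` is not
      -- `∼°`-indifferent to any characteristic function
      ¬ ∃ A : MSet Ω,
        φ (m A.1) = φ (T (t • indicatorConstLp ⊤ C.2 (measure_ne_top μ C.1) (1 : ℝ) +
          (1 - t) • indicatorConstLp ⊤ D.2 (measure_ne_top μ D.1) (1 : ℝ))) := by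
  classical
  rw [Convex] at hnc
  push_neg at hnc
  obtain ⟨x, hx, hns⟩ := hnc
  rw [StarConvex] at hns
  push_neg at hns
  obtain ⟨y, hy, a, b, ha, hb, hab, hxy⟩ := hns
  obtain ⟨C, hC⟩ := hx
  obtain ⟨D, hD⟩ := hy
  -- a ∈ (0,1)
  have ha0 : a ≠ 0 := by
    rintro rfl
    apply hxy
    simp only [zero_add, zero_smul] at hab ⊢
    subst hab
    exact ⟨D, by simpa using hD⟩
  have ha1 : a ≠ 1 := by
    rintro rfl
    apply hxy
    have : b = 0 := by linarith
    subst this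
    exact ⟨C, by simpa using hC⟩
  have hIoo : a ∈ Set.Ioo (0:ℝ) 1 := ⟨lt_of_le_of_ne ha ha0.symm,
    lt_of_le_of_ne (by nlinarith : a ≤ 1) ha1⟩
  have hb' : b = 1 - a := by linarith
  subst hb'
  set fC := indicatorConstLp ⊤ C.2 (measure_ne_top μ C.1) (1 : ℝ) with hfC
  set fD := indicatorConstLp ⊤ D.2 (measure_ne_top μ D.1) (1 : ℝ) with hfD
  have hTf : T (a • fC + (1 - a) • fD) = a • x + (1 - a) • y := by
    rw [map_add, _root_.map_smul, _root_.map_smul, hfC, hfD, hT _ C.2, hT _ D.2, hC, hD]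
  set xh := a • x + (1 - a) • y with hxh
  refine ⟨fun z => ‖xh‖ - ‖xh - z‖, a, C, D, hIoo, ?_, by simp, ?_, ?_, ?_, ?_⟩
  · exact ((continuous_const.sub ((continuous_const.sub continuous_id).norm)).continuousOn)
  · -- membership in Sset
    have h1 := indicatorConstLp_coeFn (p := (⊤ : ENNReal)) (hs := C.2)
      (hμs := measure_ne_top μ C.1) (c := (1:ℝ))
    have h2 := indicatorConstLp_coeFn (p := (⊤ : ENNReal)) (hs := D.2)
      (hμs := measure_ne_top μ D.1) (c := (1:ℝ))
    have h3 := Lp.coeFn_add (a • fC) ((1 - a) • fD)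
    have h4 := Lp.coeFn_smul a fC
    have h5 := Lp.coeFn_smul (1 - a) fD
    filter_upwards [h1, h2, h3, h4, h5] with ω e1 e2 e3 e4 e5
    rw [e3, Pi.add_apply, e4, e5, Pi.smul_apply, Pi.smul_apply, e1, e2]
    simp only [smul_eq_mul]
    obtain ⟨h0a, ha1'⟩ := hIoo
    by_cases hωC : ω ∈ C.1 <;> by_cases hωD : ω ∈ D.1 <;>
      simp [Set.indicator_apply, hωC, hωD] <;> constructor <;> nlinarith
  · intro z _
    rw [hTf]
    have : (0:ℝ) ≤ ‖xh - z‖ := norm_nonneg _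
    simp only [sub_self, norm_zero]
    linarith
  · intro z _ hz
    rw [hTf] at hz ⊢
    simp only [sub_self, norm_zero, sub_zero] at hz
    have : ‖xh - z‖ = 0 := by linarith
    exact (sub_eq_zero.mp (norm_eq_zero.mp this)).symm
  · rintro ⟨A, hA⟩
    rw [hTf] at hA
    simp only [sub_self, norm_zero, sub_zero] at hA
    have : ‖xh - m A.1‖ = 0 := by linarith
    exact hxy ⟨A, sub_eq_zero.mp (norm_eq_zero.mp this)⟩
end

section
/- Let (Ω, Σ, μ) be a finite measure space, E_1, …, E_n Banach spaces, and for each i let m_i : Σ → E_i be a μ-continuous vector measure and φ_i : m_i(S) → ℝ a continuous function, with utility ν_i(f) = φ_i(∫ f dm_i) on S. Suppose the combined vector measure m = (μ, m_1, …, m_n) : Σ → ℝ × E_1 × ⋯ × E_n has the property that for every A ∈ Σ there exists a measurable B ⊆ A with m(B) = m(A)/2. Then every extreme point (g_1, …, g_n) of the set A(f_1,…,f_n) := {(g_1,…,g_n) ∈ A : ν_i(g_i) = ν_i(f_i) for all i}, for any allocation (f_1,…,f_n), has the property that each g_i is a.e. equal to a characteristic function. -/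
/-!
If `g i` took values in `(0, 1)` on a non-null set, then, the `g k` summing to `1`, some `g j`
with `j ≠ i` would also be positive there, so `ε ≤ min (g i) (g j)` on a non-null set `A`.
Halving `A` into `B` and `A \ B` gives `p = ε (1_B - 1_{A \ B}) ≠ 0` with `T k p = 0` for all `k`.
Shifting `p` from `g j` to `g i`, or back, yields two allocations with the same utilities
whose midpoint is `g`, contradicting extremality.
-/

open MeasureTheory

/-- The set of allocations: `n`-tuples in `S^n` summing to `1` a.e. -/
def Alloc {Ω : Type*} [MeasurableSpace Ω] (μ : Measure Ω) (n : ℕ) :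
    Set (Fin n → Lp ℝ ⊤ μ) :=
  {f | (∀ i, f i ∈ Sset μ) ∧ ∀ᵐ x ∂μ, (∑ i, f i x) = 1}

theorem eq_zero_of_add_mem_of_sub_mem_of_mem_extremePoints {𝕜 E : Type*} [Field 𝕜]
    [LinearOrder 𝕜] [IsStrictOrderedRing 𝕜] [AddCommGroup E] [Module 𝕜 E] {s : Set E}
    {x v : E} (hx : x ∈ s.extremePoints 𝕜) (hadd : x + v ∈ s) (hsub : x - v ∈ s) : v = 0 := by
  have hmid : x ∈ openSegment 𝕜 (x + v) (x - v) :=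
    ⟨1 / 2, 1 / 2, by norm_num, by norm_num, by norm_num, by module⟩
  simpa using hx.2 hadd hsub hmid

section Pointwise

variable {ι : Type*} [Fintype ι] {a : ι → ℝ}

theorem eq_zero_or_eq_one_of_sum_eq_one (ha : ∀ k, 0 ≤ a k) (hsum : ∑ k, a k = 1) {i : ι}
    (hi : ∀ j ≠ i, ¬ 0 < min (a i) (a j)) : a i = 0 ∨ a i = 1 := by
  rcases (ha i).eq_or_lt with h0 | hpos
  · exact Or.inl h0.symm
  · refine Or.inr (hsum ▸ (Finset.sum_eq_single i (fun j _ hji => ?_) (by simp)).symm)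
    exact le_antisymm (not_lt.1 fun hj => hi j hji (lt_min hpos hj)) (ha j)

theorem add_single_sub_single_mul_mem_Icc [DecidableEq ι] (ha : ∀ k, 0 ≤ a k)
    (hsum : ∑ k, a k = 1) {i j : ι} (hij : i ≠ j) {t : ℝ} (ht : |t| ≤ min (a i) (a j)) (k : ι) :
    a k + (Pi.single i 1 - Pi.single j 1 : ι → ℝ) k * t ∈ Set.Icc 0 1 := by
  have hle : ∀ l, a l ≤ 1 := fun l =>
    hsum ▸ Finset.single_le_sum (fun k _ => ha k) (Finset.mem_univ l)
  have hij_le : a i + a j ≤ 1 := hsum ▸ by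
    simpa [Finset.sum_pair hij] using
      Finset.sum_le_sum_of_subset_of_nonneg (Finset.subset_univ {i, j}) (fun k _ _ => ha k)
  obtain ⟨ht₁, ht₂⟩ := abs_le.1 ht
  have hti := min_le_left (a i) (a j)
  have htj := min_le_right (a i) (a j)
  rcases eq_or_ne k i with rfl | hki
  · rw [show (Pi.single k 1 - Pi.single j 1 : ι → ℝ) k = 1 by simp [hij], one_mul]
    constructor <;> linarith
  rcases eq_or_ne k j with rfl | hkj
  · rw [show (Pi.single i 1 - Pi.single k 1 : ι → ℝ) k = -1 by simp [hki], neg_one_mul]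
    constructor <;> linarith
  · rw [show (Pi.single i 1 - Pi.single j 1 : ι → ℝ) k = 0 by simp [hki, hkj], zero_mul, add_zero]
    exact ⟨ha k, hle k⟩

end Pointwise

section Measure

variable {Ω : Type*} [MeasurableSpace Ω] {μ : Measure Ω}

theorem exists_pos_measure_setOf_le_ne_zero {u : Ω → ℝ} (h : μ {x | 0 < u x} ≠ 0) :
    ∃ ε > 0, μ {x | ε ≤ u x} ≠ 0 := by
  by_contra! hnull
  refine h (measure_mono_null (fun x (hx : 0 < u x) => ?_) (measure_iUnion_null fun k : ℕ =>
    hnull (1 / (k + 1)) (by positivity)))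
  obtain ⟨k, hk⟩ := exists_nat_one_div_lt hx
  exact Set.mem_iUnion.2 ⟨k, hk.le⟩

theorem indicatorConstLp_ne_indicatorConstLp_sdiff [IsFiniteMeasure μ] {A B : Set Ω}
    (hA : MeasurableSet A) (hB : MeasurableSet B) (hμB : μ B ≠ 0) :
    indicatorConstLp ⊤ hB (measure_ne_top μ B) (1 : ℝ) ≠
      indicatorConstLp ⊤ (hA.diff hB) (measure_ne_top μ _) 1 := by
  rw [Ne, indicatorConstLp_inj _ _ _ _ one_ne_zero, ae_eq_set]
  rintro ⟨hnull, -⟩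
  exact hμB (by rwa [Set.disjoint_sdiff_right.sdiff_eq_left] at hnull)

theorem map_indicatorConstLp_sub_sdiff_eq_zero [IsFiniteMeasure μ] {E : Type*}
    [AddCommGroup E] [TopologicalSpace E] [T2Space E] [Module ℝ E] (m : VectorMeasure Ω E)
    (T : Lp ℝ ⊤ μ →ₗ[ℝ] E)
    (hT : ∀ (A : Set Ω) (hA : MeasurableSet A),
      T (indicatorConstLp ⊤ hA (measure_ne_top μ A) (1 : ℝ)) = m A)
    {A B : Set Ω} (hA : MeasurableSet A) (hB : MeasurableSet B) (hBA : B ⊆ A)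
    (hmB : m B + m B = m A) :
    T (indicatorConstLp ⊤ hB (measure_ne_top μ B) (1 : ℝ) -
      indicatorConstLp ⊤ (hA.diff hB) (measure_ne_top μ _) 1) = 0 := by
  rw [map_sub, hT, hT, sub_eq_zero]
  exact add_left_cancel (hmB.trans (VectorMeasure.of_add_of_sdiff hB hA hBA).symm)

theorem exists_ne_zero_forall_map_eq_zero_abs_le [IsFiniteMeasure μ] {ι : Type*}
    {E : ι → Type*} [∀ i, AddCommGroup (E i)] [∀ i, TopologicalSpace (E i)]
    [∀ i, T2Space (E i)] [∀ i, Module ℝ (E i)] (m : ∀ i, VectorMeasure Ω (E i))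
    (T : ∀ i, Lp ℝ ⊤ μ →ₗ[ℝ] E i)
    (hT : ∀ i, ∀ (A : Set Ω) (hA : MeasurableSet A),
      T i (indicatorConstLp ⊤ hA (measure_ne_top μ A) (1 : ℝ)) = m i A)
    (hhalf : ∀ A : Set Ω, MeasurableSet A → ∃ B : Set Ω, B ⊆ A ∧ MeasurableSet B ∧
      μ B + μ B = μ A ∧ ∀ i, m i B + m i B = m i A)
    {u : Ω → ℝ} (hu : Measurable u) (hu₀ : 0 ≤ᵐ[μ] u) (hpos : μ {x | 0 < u x} ≠ 0) :
    ∃ p : Lp ℝ ⊤ μ, p ≠ 0 ∧ (∀ i, T i p = 0) ∧ ∀ᵐ x ∂μ, |p x| ≤ u x := by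
  obtain ⟨ε, hε, hμA⟩ := exists_pos_measure_setOf_le_ne_zero hpos
  have hA : MeasurableSet {x | ε ≤ u x} := measurableSet_le measurable_const hu
  obtain ⟨B, hBA, hB, hμB, hmB⟩ := hhalf _ hA
  have hμB₀ : μ B ≠ 0 := fun h => hμA (by rw [← hμB, h, add_zero])
  set d := indicatorConstLp ⊤ hB (measure_ne_top μ B) (1 : ℝ) -
    indicatorConstLp ⊤ (hA.diff hB) (measure_ne_top μ _) 1
  refine ⟨ε • d, smul_ne_zero hε.ne'
      (sub_ne_zero.2 (indicatorConstLp_ne_indicatorConstLp_sdiff hA hB hμB₀)),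
    fun i => by rw [map_smul, map_indicatorConstLp_sub_sdiff_eq_zero _ _ (hT i) hA hB hBA (hmB i),
      smul_zero], ?_⟩
  filter_upwards [Lp.coeFn_smul ε d,
    Lp.coeFn_sub (indicatorConstLp ⊤ hB (measure_ne_top μ B) (1 : ℝ))
      (indicatorConstLp ⊤ (hA.diff hB) (measure_ne_top μ _) 1),
    indicatorConstLp_coeFn (p := ⊤) (hs := hB) (hμs := measure_ne_top μ B) (c := (1 : ℝ)),
    indicatorConstLp_coeFn (p := ⊤) (hs := hA.diff hB) (hμs := measure_ne_top μ _) (c := (1 : ℝ)),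
    hu₀] with x hd hsub hB₁ hAB₁ hux
  rw [hd, Pi.smul_apply, hsub, Pi.sub_apply, hB₁, hAB₁]
  by_cases hxB : x ∈ B
  · simpa [hxB, abs_of_pos hε] using hBA hxB
  by_cases hxA : ε ≤ u x
  · simp [hxB, hxA, abs_of_pos hε]
  · simpa [hxB, hxA] using hux

variable {n : ℕ} {g : Fin n → Lp ℝ ⊤ μ}

theorem exists_ae_eq_indicator_of_mem_Alloc (hg : g ∈ Alloc μ n) (i : Fin n)
    (h : ∀ j ≠ i, μ {x | 0 < min (g i x) (g j x)} = 0) :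
    ∃ B : Set Ω, MeasurableSet B ∧ (g i : Ω → ℝ) =ᵐ[μ] B.indicator (fun _ => (1 : ℝ)) := by
  refine ⟨{x | g i x = 1}, (Lp.stronglyMeasurable (g i)).measurable (measurableSet_singleton 1),
    ?_⟩
  have hnull : ∀ᵐ x ∂μ, ∀ j ≠ i, ¬ 0 < min (g i x) (g j x) := ae_all_iff.2 fun j => by
    by_cases hj : j = i
    · exact .of_forall fun _ hji => (hji hj).elim
    · filter_upwards [measure_eq_zero_iff_ae_notMem.1 (h j hj)] with x hx _ using hx
  filter_upwards [ae_all_iff.2 hg.1, hg.2, hnull] with x hbd hsum hx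
  rcases eq_zero_or_eq_one_of_sum_eq_one (fun k => (hbd k).1) hsum hx with h0 | h1 <;> simp [*]

theorem add_smul_single_sub_single_mem_Alloc (hg : g ∈ Alloc μ n) {i j : Fin n} (hij : i ≠ j)
    {p : Lp ℝ ⊤ μ} (hp : ∀ᵐ x ∂μ, |p x| ≤ min (g i x) (g j x)) :
    (fun k => g k + (Pi.single i 1 - Pi.single j 1 : Fin n → ℝ) k • p) ∈ Alloc μ n := by
  set c : Fin n → ℝ := Pi.single i 1 - Pi.single j 1
  have hcoe : ∀ᵐ x ∂μ, ∀ k, (g k + c k • p : Lp ℝ ⊤ μ) x = g k x + c k * p x :=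
    ae_all_iff.2 fun k => by
      filter_upwards [Lp.coeFn_add (g k) (c k • p), Lp.coeFn_smul (c k) p] with x h₁ h₂
      rw [h₁, Pi.add_apply, h₂, Pi.smul_apply, smul_eq_mul]
  have hmem : ∀ᵐ x ∂μ, (∀ k, (g k + c k • p : Lp ℝ ⊤ μ) x ∈ Set.Icc 0 1) ∧
      ∑ k, (g k + c k • p : Lp ℝ ⊤ μ) x = 1 := by
    filter_upwards [hcoe, ae_all_iff.2 hg.1, hg.2, hp] with x hx hbd hsum hpx
    refine ⟨fun k => hx k ▸
      add_single_sub_single_mul_mem_Icc (fun k => (hbd k).1) hsum hij hpx k, ?_⟩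
    calc ∑ k, (g k + c k • p : Lp ℝ ⊤ μ) x = ∑ k, g k x + (∑ k, c k) * p x := by
          simp only [hx, Finset.sum_add_distrib, Finset.sum_mul]
      _ = 1 := by simp [hsum, c, Finset.sum_sub_distrib]
  exact ⟨fun k => hmem.mono fun x hx => hx.1 k, hmem.mono fun x hx => hx.2⟩

end Measure

theorem stmt12_general {Ω : Type*} [MeasurableSpace Ω] (μ : Measure Ω) [IsFiniteMeasure μ]
    {n : ℕ} (E : Fin n → Type*) [∀ i, NormedAddCommGroup (E i)]
    [∀ i, NormedSpace ℝ (E i)]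
    (m : ∀ i, VectorMeasure Ω (E i))
    -- `T i` is the integration operator `f ↦ ∫ f dm_i`
    (T : ∀ i, Lp ℝ ⊤ μ →ₗ[ℝ] E i)
    (hT : ∀ i, ∀ (A : Set Ω) (hA : MeasurableSet A),
      T i (indicatorConstLp ⊤ hA (measure_ne_top μ A) (1 : ℝ)) = m i A)
    -- `φ i` is continuous on `m_i(S)`; the utility is `ν_i(f) = φ_i(∫ f dm_i)`
    (φ : ∀ i, E i → ℝ)
    -- halving property of the combined measure `m = (μ, m_1, …, m_n)`: every
    -- measurable `A` has a measurable subset `B` with `m(B) = m(A)/2`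
    (hhalf : ∀ A : Set Ω, MeasurableSet A → ∃ B : Set Ω, B ⊆ A ∧ MeasurableSet B ∧
      μ B + μ B = μ A ∧ ∀ i, m i B + m i B = m i A)
    -- `(f_1, …, f_n)` is an allocation and `(g_1, …, g_n)` an extreme point of the
    -- set of allocations indifferent to it
    (f : Fin n → Lp ℝ ⊤ μ)
    (g : Fin n → Lp ℝ ⊤ μ)
    (hg : g ∈ Set.extremePoints ℝ
      {h : Fin n → Lp ℝ ⊤ μ | h ∈ Alloc μ n ∧ ∀ i, φ i (T i (h i)) = φ i (T i (f i))}) :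
    -- each `g_i` is a.e. equal to a characteristic function
    ∀ i, ∃ B : Set Ω, MeasurableSet B ∧
      (g i : Ω → ℝ) =ᵐ[μ] B.indicator (fun _ => (1 : ℝ)) := by
  intro i
  by_contra hnot
  obtain ⟨j, hji, hpos⟩ : ∃ j ≠ i, μ {x | 0 < min (g i x) (g j x)} ≠ 0 := by
    by_contra! hnull
    exact hnot (exists_ae_eq_indicator_of_mem_Alloc hg.1.1 i hnull)
  obtain ⟨p, hp₀, hTp, hpg⟩ := exists_ne_zero_forall_map_eq_zero_abs_le m T hT hhalf
    ((Lp.stronglyMeasurable _).measurable.min (Lp.stronglyMeasurable _).measurable)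
    (by filter_upwards [hg.1.1.1 i, hg.1.1.1 j] with x hi hj using le_min hi.1 hj.1) hpos
  set c : Fin n → ℝ := Pi.single i 1 - Pi.single j 1
  have hmem : ∀ q : Lp ℝ ⊤ μ, (∀ k, T k q = 0) → (∀ᵐ x ∂μ, |q x| ≤ min (g i x) (g j x)) →
      (fun k => g k + c k • q) ∈
        {h : Fin n → Lp ℝ ⊤ μ | h ∈ Alloc μ n ∧ ∀ i, φ i (T i (h i)) = φ i (T i (f i))} :=
    fun q hTq hq => ⟨add_smul_single_sub_single_mem_Alloc hg.1.1 hji.symm hq,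
      fun k => by simpa [hTq k] using hg.1.2 k⟩
  have hneg : ∀ᵐ x ∂μ, |(-p : Lp ℝ ⊤ μ) x| ≤ min (g i x) (g j x) := by
    filter_upwards [Lp.coeFn_neg p, hpg] with x hx hpx
    rwa [hx, Pi.neg_apply, abs_neg]
  have hsub : (g - fun k => c k • p) = fun k => g k + c k • -p := by
    funext k
    simp [sub_eq_add_neg]
  have hc := eq_zero_of_add_mem_of_sub_mem_of_mem_extremePoints (v := fun k => c k • p) hg
    (hmem p hTp hpg) (hsub ▸ hmem (-p) (by simp [hTp]) hneg)
  exact hp₀ (by simpa [c, hji.symm] using congrFun hc i)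

theorem stmt12 {Ω : Type*} [MeasurableSpace Ω] (μ : Measure Ω) [IsFiniteMeasure μ]
    {n : ℕ} (E : Fin n → Type*) [∀ i, NormedAddCommGroup (E i)]
    [∀ i, NormedSpace ℝ (E i)]
    (m : ∀ i, VectorMeasure Ω (E i))
    (habs : ∀ i, ∀ N : Set Ω, μ N = 0 → ∀ A : Set Ω, MeasurableSet A → m i (A ∩ N) = 0)
    -- `T i` is the integration operator `f ↦ ∫ f dm_i`
    (T : ∀ i, Lp ℝ ⊤ μ →ₗ[ℝ] E i)
    (hT : ∀ i, ∀ (A : Set Ω) (hA : MeasurableSet A),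
      T i (indicatorConstLp ⊤ hA (measure_ne_top μ A) (1 : ℝ)) = m i A)
    -- `φ i` is continuous on `m_i(S)`; the utility is `ν_i(f) = φ_i(∫ f dm_i)`
    (φ : ∀ i, E i → ℝ) (hφ : ∀ i, ContinuousOn (φ i) (T i '' Sset μ))
    -- halving property of the combined measure `m = (μ, m_1, …, m_n)`: every
    -- measurable `A` has a measurable subset `B` with `m(B) = m(A)/2`
    (hhalf : ∀ A : Set Ω, MeasurableSet A → ∃ B : Set Ω, B ⊆ A ∧ MeasurableSet B ∧
      μ B + μ B = μ A ∧ ∀ i, m i B + m i B = m i A)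
    -- `(f_1, …, f_n)` is an allocation and `(g_1, …, g_n)` an extreme point of the
    -- set of allocations indifferent to it
    (f : Fin n → Lp ℝ ⊤ μ) (hf : f ∈ Alloc μ n)
    (g : Fin n → Lp ℝ ⊤ μ)
    (hg : g ∈ Set.extremePoints ℝ
      {h : Fin n → Lp ℝ ⊤ μ | h ∈ Alloc μ n ∧ ∀ i, φ i (T i (h i)) = φ i (T i (f i))}) :
    -- each `g_i` is a.e. equal to a characteristic function
    ∀ i, ∃ B : Set Ω, MeasurableSet B ∧
      (g i : Ω → ℝ) =ᵐ[μ] B.indicator (fun _ => (1 : ℝ)) :=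
  stmt12_general μ E m T hT φ hhalf f g hg
end

section
/- Let (Ω, Σ, μ) be a finite measure space and suppose the utility functions ν_i° : S → ℝ, i = 1, …, n, are weakly* continuous and quasiconcave. Define the NTU market game V : I → 2^{ℝ^n} by V(S) = {x ∈ ℝ^n : there exists an S-allocation (f_1,…,f_n) with x_i ≤ ν_i°(f_i) for all i ∈ S}, where an S-allocation is an allocation with ∑_{i∈S} f_i = ∑_{i∈S} χ_{Ω_i} for a fixed initial partition (Ω_1,…,Ω_n). Then V is balanced: for every balanced family B of coalitions with balancing weights, ⋂_{S∈B} V(S) ⊆ V(I). -/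
/-!
Give each member `i` the `λ`-weighted sum of the shares it receives in the coalitions of `B`
containing it. Balancedness makes these weights sum to `1`, so each new share is a convex
combination of old ones and quasiconcavity keeps `x i ≤ ν i (f i)`. Summing over all members and
exchanging the sums, `∑ i, f i = ∑ S ∈ B, λ S ∑ i ∈ S, χ_{W i} = ∑ i, χ_{W i} = 1` a.e., again by
balancedness.
-/

open MeasureTheory

/-- The weak* topology on `L^∞ = (L^1)^*`. -/
noncomputable def wst {Ω : Type*} [MeasurableSpace Ω] (μ : Measure Ω) :
    TopologicalSpace (Lp ℝ ⊤ μ) :=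
  TopologicalSpace.induced (fun f => (fun g : Lp ℝ 1 μ => ∫ x, f x * g x ∂μ)) inferInstance

/-- `S`-allocations relative to the initial partition `W`: allocations with
`∑_{i ∈ S} f_i = ∑_{i ∈ S} χ_{W i}` (a.e.). -/
def SAlloc {Ω : Type*} [MeasurableSpace Ω] (μ : Measure Ω) (n : ℕ)
    (W : Fin n → Set Ω) (S : Finset (Fin n)) : Set (Fin n → Lp ℝ ⊤ μ) :=
  {f | f ∈ Alloc μ n ∧
    ∀ᵐ x ∂μ, ∑ i ∈ S, f i x = ∑ i ∈ S, (W i).indicator (fun _ => (1 : ℝ)) x}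

/-- The NTU market game `V`. -/
def Vgame {Ω : Type*} [MeasurableSpace Ω] (μ : Measure Ω) (n : ℕ)
    (W : Fin n → Set Ω) (ν : Fin n → Lp ℝ ⊤ μ → ℝ) (S : Finset (Fin n)) :
    Set (Fin n → ℝ) :=
  {x | ∃ f ∈ SAlloc μ n W S, ∀ i ∈ S, x i ≤ ν i (f i)}

open Finset

theorem sum_indicator_const_of_partition {ι α M : Type*} [Fintype ι] [AddCommMonoid M]
    {W : ι → Set α} (hWd : Pairwise (Function.onFun Disjoint W)) (hWu : ⋃ i, W i = Set.univ)
    (c : M) (y : α) : ∑ i, (W i).indicator (fun _ => c) y = c := by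
  rw [← indicator_biUnion_apply _ _ (hWd.set_pairwise _)]
  simp [hWu]

section Balanced

variable {ι : Type*} [DecidableEq ι]

theorem sum_sum_filter_mem_eq [Fintype ι] {M : Type*} [AddCommMonoid M] (B : Finset (Finset ι))
    (a : Finset ι → ι → M) :
    ∑ i, ∑ S ∈ B with i ∈ S, a S i = ∑ S ∈ B, ∑ i ∈ S, a S i :=
  (sum_comm' fun i S => by simp [and_comm]).symm

theorem sum_mul_sum_of_balanced [Fintype ι] {R : Type*} [Semiring R] {B : Finset (Finset ι)}
    {lam : Finset ι → R} (hbal : ∀ i, ∑ S ∈ B with i ∈ S, lam S = 1) (c : ι → R) :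
    ∑ S ∈ B, lam S * ∑ i ∈ S, c i = ∑ i, c i := by
  simp_rw [mul_sum, ← sum_sum_filter_mem_eq, ← sum_mul, hbal, one_mul]

noncomputable def balancedCombination {R E : Type*} [Semiring R] [AddCommMonoid E] [Module R E]
    (B : Finset (Finset ι)) (lam : Finset ι → R) (g : Finset ι → ι → E) (i : ι) : E :=
  ∑ S ∈ B with i ∈ S, lam S • g S i

theorem balancedCombination_mem {E : Type*} [AddCommGroup E] [Module ℝ E] {s : Set E}
    (hs : Convex ℝ s) {B : Finset (Finset ι)} {lam : Finset ι → ℝ} (hlam : ∀ S ∈ B, 0 ≤ lam S)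
    (hbal : ∀ i, ∑ S ∈ B with i ∈ S, lam S = 1) {g : Finset ι → ι → E} {i : ι}
    (hg : ∀ S ∈ B, i ∈ S → g S i ∈ s) : balancedCombination B lam g i ∈ s :=
  hs.sum_mem (fun S hS => hlam S (mem_filter.1 hS).1) (hbal i)
    fun S hS => hg S (mem_filter.1 hS).1 (mem_filter.1 hS).2

end Balanced

section Lp

variable {Ω E : Type*} [MeasurableSpace Ω] {μ : Measure Ω} {p : ENNReal}
  [NormedAddCommGroup E] [NormedSpace ℝ E]

theorem Lp.ae_finsetSum_smul_apply {κ : Type*} (s : Finset κ) (c : κ → ℝ) (f : κ → Lp E p μ) :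
    ∀ᵐ x ∂μ, (∑ k ∈ s, c k • f k : Lp E p μ) x = ∑ k ∈ s, c k • f k x := by
  filter_upwards [Lp.coeFn_fun_finsetSum s (fun k => c k • f k),
    (Filter.eventually_all_finset s).2 fun k _ => Lp.coeFn_smul (c k) (f k)] with x hsum hsmul
  rw [hsum]
  exact sum_congr rfl hsmul

theorem ae_sum_balancedCombination_apply {ι : Type*} [Fintype ι] [DecidableEq ι]
    {B : Finset (Finset ι)} {lam : Finset ι → ℝ} (hbal : ∀ i, ∑ S ∈ B with i ∈ S, lam S = 1)
    {g : Finset ι → ι → Lp ℝ p μ} {h : ι → Ω → ℝ}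
    (hg : ∀ S ∈ B, ∀ᵐ x ∂μ, ∑ i ∈ S, g S i x = ∑ i ∈ S, h i x) :
    ∀ᵐ x ∂μ, ∑ i, balancedCombination B lam g i x = ∑ i, h i x := by
  filter_upwards [ae_all_iff.2 fun i => Lp.ae_finsetSum_smul_apply _ lam fun S => g S i,
    (Filter.eventually_all_finset B).2 hg] with x hcomb hgx
  calc ∑ i, balancedCombination B lam g i x
      = ∑ i, ∑ S ∈ B with i ∈ S, lam S * g S i x := sum_congr rfl fun i _ => hcomb i
    _ = ∑ S ∈ B, lam S * ∑ i ∈ S, g S i x := by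
      simp_rw [sum_sum_filter_mem_eq, mul_sum]
    _ = ∑ S ∈ B, lam S * ∑ i ∈ S, h i x := sum_congr rfl fun S hS => by rw [hgx S hS]
    _ = ∑ i, h i x := sum_mul_sum_of_balanced hbal _

end Lp

theorem balancedCombination_mem_SAlloc_univ {Ω : Type*} [MeasurableSpace Ω] {μ : Measure Ω}
    {n : ℕ} {W : Fin n → Set Ω} (hWd : Pairwise (Function.onFun Disjoint W))
    (hWu : ⋃ i, W i = Set.univ) {B : Finset (Finset (Fin n))} {lam : Finset (Fin n) → ℝ}
    (hbal : ∀ i, ∑ S ∈ B with i ∈ S, lam S = 1) {g : Finset (Fin n) → Fin n → Lp ℝ ⊤ μ}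
    (hg : ∀ S ∈ B, g S ∈ SAlloc μ n W S) (hmem : ∀ i, balancedCombination B lam g i ∈ Sset μ) :
    balancedCombination B lam g ∈ SAlloc μ n W univ := by
  have hsum := ae_sum_balancedCombination_apply hbal fun S hSB => (hg S hSB).2
  refine ⟨⟨hmem, ?_⟩, hsum⟩
  filter_upwards [hsum] with x hx
  rw [hx, sum_indicator_const_of_partition hWd hWu]

theorem stmt13_general {Ω : Type*} [MeasurableSpace Ω] (μ : Measure Ω)
    {n : ℕ} (W : Fin n → Set Ω)
    (hWd : Pairwise (Function.onFun Disjoint W)) (hWu : (⋃ i, W i) = Set.univ)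
    (ν : Fin n → Lp ℝ ⊤ μ → ℝ)
    -- each `ν_i` is weakly* continuous and quasiconcave on `S`
    (hνq : ∀ i, QuasiconcaveOn ℝ (Sset μ) (ν i))
    -- a balanced family of coalitions with balancing weights
    (B : Finset (Finset (Fin n)))
    (lam : Finset (Fin n) → ℝ) (hlam : ∀ S ∈ B, 0 ≤ lam S)
    (hbal : ∀ i : Fin n, ∑ S ∈ B.filter (fun S => i ∈ S), lam S = 1) :
    -- then `⋂_{S ∈ B} V(S) ⊆ V(I)`
    (⋂ S ∈ B, Vgame μ n W ν S) ⊆ Vgame μ n W ν Finset.univ := by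
  intro x hx
  choose! g hgS hgν using fun S (hS : S ∈ B) => Set.mem_iInter₂.1 hx S hS
  have hsup : ∀ i, balancedCombination B lam g i ∈ {f ∈ Sset μ | x i ≤ ν i f} := fun i =>
    balancedCombination_mem (hνq i (x i)) hlam hbal
      fun S hS hiS => ⟨(hgS S hS).1.1 i, hgν S hS i hiS⟩
  exact ⟨_, balancedCombination_mem_SAlloc_univ hWd hWu hbal hgS fun i => (hsup i).1,
    fun i _ => (hsup i).2⟩

theorem stmt13 {Ω : Type*} [MeasurableSpace Ω] (μ : Measure Ω) [IsFiniteMeasure μ]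
    {n : ℕ} (W : Fin n → Set Ω) (hWm : ∀ i, MeasurableSet (W i))
    (hWd : Pairwise (Function.onFun Disjoint W)) (hWu : (⋃ i, W i) = Set.univ)
    (ν : Fin n → Lp ℝ ⊤ μ → ℝ)
    -- each `ν_i` is weakly* continuous and quasiconcave on `S`
    (hνc : ∀ i, @ContinuousOn _ _ (wst μ) _ (ν i) (Sset μ))
    (hνq : ∀ i, QuasiconcaveOn ℝ (Sset μ) (ν i))
    -- a balanced family of coalitions with balancing weights
    (B : Finset (Finset (Fin n))) (hBne : ∀ S ∈ B, S.Nonempty)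
    (lam : Finset (Fin n) → ℝ) (hlam : ∀ S ∈ B, 0 ≤ lam S)
    (hbal : ∀ i : Fin n, ∑ S ∈ B.filter (fun S => i ∈ S), lam S = 1) :
    -- then `⋂_{S ∈ B} V(S) ⊆ V(I)`
    (⋂ S ∈ B, Vgame μ n W ν S) ⊆ Vgame μ n W ν Finset.univ :=
  stmt13_general μ W hWd hWu ν hνq B lam hlam hbal
end
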